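/- (Lemma 4, derivative positivity.) Define g : (0, 2·C_q) → ℝ by g(δ) = (1/δ)·∫_{C_q−δ}^{C_q} f_{−C_q/2}(t)·(t−(C_q−δ)) dt, where f_{−C_q/2} is the density of N(−C_q/2, σ²). Then for every δ ∈ (0, 2·C_q), g is differentiable at δ and its derivative is strictly positive: there exists d > 0 such that g has derivative d at δ. -/

import Mathlib

open MeasureTheory Real

/-- Density of the normal distribution `N(x, σ²)`. -/
noncomputable def gpdf (σ x t : ℝ) : ℝ :=
  (1 / (σ * Real.sqrt (2 * Real.pi))) * Real.exp (-(t - x) ^ 2 / (2 * σ ^ 2))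

/-- Quantization levels `B(r) = -C_q + r · δ`, with `δ = 2·C_q/(k-1)`. -/
noncomputable def Blev (Cq : ℝ) (k : ℕ) (r : ℕ) : ℝ :=
  -Cq + (r : ℝ) * (2 * Cq / ((k : ℝ) - 1))

/-- The quantized-Gaussian pmf `P_x(r)` on `{0, 1, …, k-1}`. -/
noncomputable def qgPmf (Cq σ : ℝ) (k : ℕ) (x : ℝ) (r : ℕ) : ℝ :=
  if r = 0 then
    (∫ t in Set.Iic (Blev Cq k 0), gpdf σ x t)
      + ∫ t in (Blev Cq k 0)..(Blev Cq k 1),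
          gpdf σ x t * (Blev Cq k 1 - t) / (2 * Cq / ((k : ℝ) - 1))
  else if r = k - 1 then
    (∫ t in (Blev Cq k (k - 2))..(Blev Cq k (k - 1)),
        gpdf σ x t * (t - Blev Cq k (k - 2)) / (2 * Cq / ((k : ℝ) - 1)))
      + ∫ t in Set.Ici (Blev Cq k (k - 1)), gpdf σ x t
  else
    (∫ t in (Blev Cq k (r - 1))..(Blev Cq k r),
        gpdf σ x t * (t - Blev Cq k (r - 1)) / (2 * Cq / ((k : ℝ) - 1)))
      + ∫ t in (Blev Cq k r)..(Blev Cq k (r + 1)),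
          gpdf σ x t * (Blev Cq k (r + 1) - t) / (2 * Cq / ((k : ℝ) - 1))

/- With `H(s) = ∫_{c-s}^{c} f(t)(t - (c - s)) dt` the boundary term of `H'` vanishes, so
`H'(s) = ∫_{c-s}^{c} f`. Hence `(H(s)/s)' = (s H'(s) - H(s))/s² = (∫_{c-s}^{c} f(t)(c - t) dt)/s²`,
which is positive for `s > 0` since the Gaussian density is positive and `c - t > 0` on `(c - s, c)`. -/

section TentMoment

variable {f : ℝ → ℝ} (c : ℝ)

theorem hasDerivAt_integral_sub_left (hf : Continuous f) (s : ℝ) :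
    HasDerivAt (fun s => ∫ t in (c - s)..c, f t) (f (c - s)) s := by
  have hlower : HasDerivAt (fun u => ∫ t in u..c, f t) (-f (c - s)) (c - s) :=
    intervalIntegral.integral_hasDerivAt_left (hf.intervalIntegrable _ _)
      hf.stronglyMeasurable.stronglyMeasurableAtFilter hf.continuousAt
  simpa [Function.comp_def] using hlower.comp s ((hasDerivAt_id s).const_sub c)

theorem integral_mul_sub_eq (hf : Continuous f) (a : ℝ) :
    ∫ t in a..c, f t * (t - a) = (∫ t in a..c, f t * t) - a * ∫ t in a..c, f t := by
  have hft : Continuous fun t => f t * t := by fun_prop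
  have haf : Continuous fun t => a * f t := by fun_prop
  simp_rw [mul_sub, mul_comm _ a]
  rw [intervalIntegral.integral_sub (hft.intervalIntegrable a c) (haf.intervalIntegrable a c),
    intervalIntegral.integral_const_mul]

theorem hasDerivAt_integral_mul_sub_left (hf : Continuous f) (s : ℝ) :
    HasDerivAt (fun s => ∫ t in (c - s)..c, f t * (t - (c - s))) (∫ t in (c - s)..c, f t) s := by
  have hfirst : HasDerivAt (fun s => ∫ t in (c - s)..c, f t * t) (f (c - s) * (c - s)) s :=
    hasDerivAt_integral_sub_left c (by fun_prop) s
  have hsecond : HasDerivAt (fun s => (c - s) * ∫ t in (c - s)..c, f t)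
      (-1 * (∫ t in (c - s)..c, f t) + (c - s) * f (c - s)) s :=
    ((hasDerivAt_id s).const_sub c).mul (hasDerivAt_integral_sub_left c hf s)
  rw [funext fun s => integral_mul_sub_eq c hf (c - s)]
  exact (hfirst.sub hsecond).congr_deriv (by ring)

theorem mul_integral_sub_integral_mul_sub (hf : Continuous f) (s : ℝ) :
    s * (∫ t in (c - s)..c, f t) - ∫ t in (c - s)..c, f t * (t - (c - s))
      = ∫ t in (c - s)..c, f t * (c - t) := by
  have hsf : Continuous fun t => s * f t := by fun_prop
  have htent : Continuous fun t => f t * (t - (c - s)) := by fun_prop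
  have hcomp : ∀ t, f t * (c - t) = s * f t - f t * (t - (c - s)) := fun t => by ring
  simp_rw [hcomp]
  rw [intervalIntegral.integral_sub (hsf.intervalIntegrable _ _) (htent.intervalIntegrable _ _),
    intervalIntegral.integral_const_mul]

theorem hasDerivAt_inv_mul_integral_mul_sub_left (hf : Continuous f) {δ : ℝ} (hδ : δ ≠ 0) :
    HasDerivAt (fun s => (1 / s) * ∫ t in (c - s)..c, f t * (t - (c - s)))
      ((∫ t in (c - δ)..c, f t * (c - t)) / δ ^ 2) δ := by
  have hinv : HasDerivAt (fun s : ℝ => 1 / s) (-(δ ^ 2)⁻¹) δ := by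
    simpa only [one_div] using hasDerivAt_inv hδ
  refine (hinv.mul (hasDerivAt_integral_mul_sub_left c hf δ)).congr_deriv ?_
  rw [← mul_integral_sub_integral_mul_sub c hf δ]
  field_simp
  ring

theorem integral_mul_sub_pos (hfc : Continuous f) {δ : ℝ} (hδ : 0 < δ)
    (hf : ∀ t ∈ Set.Ioo (c - δ) c, 0 < f t) :
    0 < ∫ t in (c - δ)..c, f t * (c - t) :=
  intervalIntegral.intervalIntegral_pos_of_pos_on
    ((hfc.mul (continuous_const.sub continuous_id)).intervalIntegrable _ _)
    (fun t ht => mul_pos (hf t ht) (sub_pos.mpr ht.2)) (sub_lt_self c hδ)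

end TentMoment

theorem continuous_gpdf (σ x : ℝ) : Continuous (gpdf σ x) := by
  unfold gpdf
  fun_prop

theorem gpdf_pos {σ : ℝ} (hσ : 0 < σ) (x t : ℝ) : 0 < gpdf σ x t := by
  unfold gpdf
  positivity

theorem endcell_mass_deriv_pos_general (Cq σ : ℝ) (hσ : 0 < σ)
    (δ : ℝ) (hδ : δ ∈ Set.Ioo 0 (2 * Cq)) :
    ∃ d : ℝ, 0 < d ∧
      HasDerivAt (fun s : ℝ =>
          (1 / s) * ∫ t in (Cq - s)..Cq, gpdf σ (-(Cq / 2)) t * (t - (Cq - s))) d δ :=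
  ⟨_, div_pos (integral_mul_sub_pos Cq (continuous_gpdf _ _) hδ.1 fun t _ => gpdf_pos hσ _ t)
      (pow_pos hδ.1 2),
    hasDerivAt_inv_mul_integral_mul_sub_left Cq (continuous_gpdf _ _) hδ.1.ne'⟩

/-- Lemma 4, derivative positivity: on `(0, 2·C_q)`, the normalized end-cell mass
`g(δ) = (1/δ)·∫_{C_q-δ}^{C_q} f_{-C_q/2}(t)·(t - (C_q - δ)) dt` is differentiable with
strictly positive derivative. -/
theorem endcell_mass_deriv_pos (Cq σ : ℝ) (hC : 0 < Cq) (hσ : 0 < σ)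
    (δ : ℝ) (hδ : δ ∈ Set.Ioo 0 (2 * Cq)) :
    ∃ d : ℝ, 0 < d ∧
      HasDerivAt (fun s : ℝ =>
          (1 / s) * ∫ t in (Cq - s)..Cq, gpdf σ (-(Cq / 2)) t * (t - (Cq - s))) d δ :=
  endcell_mass_deriv_pos_general Cq σ hσ δ hδ
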